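/- Every locally finite, connected, claw-free and bull-free graph has at most two ends. -/

import Mathlib

open SimpleGraph

universe u

/-- The claw `K_{1,3}`, with centre `0`. -/
def claw : SimpleGraph (Fin 4) := SimpleGraph.fromRel (fun a _ => a = 0)

/-- The bull: triangle `0 1 2` with horns `3` (adjacent to `0`) and `4` (adjacent to `1`). -/
def bull : SimpleGraph (Fin 5) := SimpleGraph.fromRel (fun a b =>
  (a = 0 ∧ b = 1) ∨ (a = 0 ∧ b = 2) ∨ (a = 1 ∧ b = 2) ∨ (a = 3 ∧ b = 0) ∨ (a = 4 ∧ b = 1))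

/-- The net: triangle `0 1 2` with pendant vertices `3`, `4`, `5` attached to `0`, `1`, `2`. -/
def net : SimpleGraph (Fin 6) := SimpleGraph.fromRel (fun a b =>
  (a = 0 ∧ b = 1) ∨ (a = 0 ∧ b = 2) ∨ (a = 1 ∧ b = 2) ∨
  (a = 3 ∧ b = 0) ∨ (a = 4 ∧ b = 1) ∨ (a = 5 ∧ b = 2))

/-- `S` is a vertex separator of `G`: deleting `S` leaves a disconnected graph. -/
def IsSeparator {V : Type u} (G : SimpleGraph V) (S : Set V) : Prop :=
  ¬ (G.induce (Sᶜ : Set V)).Preconnected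

/-- `S` is a minimal vertex separator of `G`. -/
def IsMinSeparator {V : Type u} (G : SimpleGraph V) (S : Set V) : Prop :=
  IsSeparator G S ∧ ∀ T : Set V, T ⊂ S → ¬ IsSeparator G T

/-- A ray (one-way infinite path) in `G`. -/
def IsRay {V : Type u} (G : SimpleGraph V) (f : ℕ → V) : Prop :=
  Function.Injective f ∧ ∀ n, G.Adj (f n) (f (n + 1))

/-- A double ray (two-way infinite path) in `G`. -/
def IsDoubleRay {V : Type u} (G : SimpleGraph V) (f : ℤ → V) : Prop :=
  Function.Injective f ∧ ∀ n : ℤ, G.Adj (f n) (f (n + 1))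

/-- The vertex set of the component `c` of `G - v`, together with `v` itself. -/
def compSet {V : Type u} (G : SimpleGraph V) (v : V)
    (c : (G.induce {x | x ≠ v}).ConnectedComponent) : Set V :=
  insert v {x : V | ∃ h : x ≠ v, (G.induce {x | x ≠ v}).connectedComponentMk ⟨x, h⟩ = c}

/-- `G` is distance-2-complete centered at `v`: `G - v` has exactly two connected components,
and in each component `C` and for each `i`, the vertices at distance `i` from `v` in
`G[V(C) ∪ {v}]` induce a complete graph. -/
def DistanceTwoComplete {V : Type u} (G : SimpleGraph V) (v : V) : Prop :=
  (∃ c₁ c₂ : (G.induce {x | x ≠ v}).ConnectedComponent, c₁ ≠ c₂ ∧ ∀ c, c = c₁ ∨ c = c₂) ∧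
  ∀ c : (G.induce {x | x ≠ v}).ConnectedComponent, ∀ i : ℕ, ∀ x y : V,
    ∀ hx : x ∈ compSet G v c, ∀ hy : y ∈ compSet G v c, x ≠ y →
    (G.induce (compSet G v c)).dist ⟨v, Set.mem_insert v _⟩ ⟨x, hx⟩ = i →
    (G.induce (compSet G v c)).dist ⟨v, Set.mem_insert v _⟩ ⟨y, hy⟩ = i →
    G.Adj x y

/-- The ray `f` converges to the end `e` of `G`: for every finite vertex set `K`, a tail of the
ray lies in the component of `G - K` corresponding to `e`. -/
def RayTo {V : Type u} (G : SimpleGraph V) (f : ℕ → V) (e : G.end) : Prop :=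
  ∀ K : Finset V, ∃ N : ℕ, ∀ n, N ≤ n →
    ∃ h : f n ∉ (K : Set V), G.componentComplMk h = e.val (Opposite.op K)

/-- The distance class: vertices of `R` at distance exactly `n` from `v` in `G[R ∪ {v}]`. -/
def distClass {V : Type u} (G : SimpleGraph V) (v : V) (R : Set V) (n : ℕ) : Set V :=
  {x : V | x ∈ R ∧ ∃ h : x ∈ insert v R,
    (G.induce (insert v R)).dist ⟨v, Set.mem_insert v R⟩ ⟨x, h⟩ = n}

/-!
Suppose `G` has three ends. Then some finite `S` leaves three infinite components of `G - S`;
take `S` minimal. By minimality every `s ∈ S` touches at least two of the three components, and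
by claw-freeness at most two. As every component is touched by `S`, there are `s, t ∈ S` missing
different components: `s` touches `C` and `D` but not `E`, while `t` touches `C` and `E` but not
`D`. Pick `y ∈ E` adjacent to `t` and `c ∈ D` adjacent to `s`, and layer `T = C ∪ {t, y}` by the
distance from `y` in `G[T]`. Since `t` is the only neighbour of `y` in `T`, claw- and bull-freeness
make every layer a clique; local finiteness makes the layers finite, so, `C` being infinite, they
are all nonempty. A claw or a bull on `s`, `c` and the layers around the lowest neighbour of `s`
in `T` gives the contradiction.
-/

namespace SimpleGraph

variable {V W : Type*} {G : SimpleGraph V} {H : SimpleGraph W}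

lemma false_of_induced_claw (hclaw : IsEmpty (claw ↪g G)) {c x y z : V}
    (hx : G.Adj c x) (hy : G.Adj c y) (hz : G.Adj c z) (hxy : x ≠ y) (hxz : x ≠ z) (hyz : y ≠ z)
    (nxy : ¬ G.Adj x y) (nxz : ¬ G.Adj x z) (nyz : ¬ G.Adj y z) : False := by
  have hinj : Function.Injective ![c, x, y, z] := by
    simp only [Matrix.vecCons, Fin.cons_injective_iff, Set.mem_range, Fin.exists_fin_succ,
      Fin.cons_zero, Fin.cons_succ, Fin.exists_fin_zero]
    simp [hx.ne', hy.ne', hz.ne', hxy.symm, hxz.symm, hyz.symm, Function.injective_of_subsingleton]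
  refine hclaw.false ⟨⟨_, hinj⟩, fun {a b} => ?_⟩
  fin_cases a <;> fin_cases b <;> simp [claw, adj_comm, *]

lemma false_of_induced_bull (hbull : IsEmpty (bull ↪g G)) {a b c d e : V}
    (hab : G.Adj a b) (hac : G.Adj a c) (hbc : G.Adj b c) (had : G.Adj a d) (hbe : G.Adj b e)
    (nae : ¬ G.Adj a e) (nbd : ¬ G.Adj b d) (ncd : ¬ G.Adj c d) (nce : ¬ G.Adj c e)
    (nde : ¬ G.Adj d e) : False := by
  have hdb : d ≠ b := fun h => ncd (h ▸ hbc.symm)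
  have hdc : d ≠ c := fun h => nbd (h ▸ hbc)
  have hea : e ≠ a := fun h => nce (h ▸ hac.symm)
  have hec : e ≠ c := fun h => nae (h ▸ hac)
  have hed : e ≠ d := fun h => nae (h ▸ had)
  have hinj : Function.Injective ![a, b, c, d, e] := by
    simp only [Matrix.vecCons, Fin.cons_injective_iff, Set.mem_range, Fin.exists_fin_succ,
      Fin.cons_zero, Fin.cons_succ, Fin.exists_fin_zero]
    simp [hab.ne', hac.ne', had.ne', hbc.ne', hbe.ne', hdb, hdc, hea, hec, hed,
      Function.injective_of_subsingleton]
  refine hbull.false ⟨⟨_, hinj⟩, fun {i j} => ?_⟩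
  fin_cases i <;> fin_cases j <;> simp [bull, adj_comm, *]

section Layers

variable {r x y : W}

lemma dist_le_dist_add_one_of_adj (h : H.Adj x y) : H.dist r y ≤ H.dist r x + 1 := by
  have := h.diff_dist_adj (u := r)
  omega

lemma not_adj_of_dist_add_two_le (h : H.dist r x + 2 ≤ H.dist r y) : ¬ H.Adj x y :=
  fun hxy => by have := dist_le_dist_add_one_of_adj (r := r) hxy; omega

lemma exists_adj_dist_eq_of_dist_eq_succ {k : ℕ} (h : H.dist r x = k + 1) :
    ∃ p, H.Adj p x ∧ H.dist r p = k := by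
  obtain ⟨w, hw⟩ := exists_walk_of_dist_ne_zero (G := H) (by omega : H.dist r x ≠ 0)
  have hlen : w.length = k + 1 := hw.trans h
  have hadj : H.Adj (w.getVert k) x := by
    simpa [← hlen] using w.adj_getVert_succ (i := k) (by omega)
  refine ⟨w.getVert k, hadj, le_antisymm ?_ ?_⟩
  · exact (H.dist_le (w.take k)).trans (by simp)
  · have := dist_le_dist_add_one_of_adj (r := r) hadj
    omega

lemma exists_dist_eq_of_le {k : ℕ} (h : k ≤ H.dist r x) : ∃ z, H.dist r z = k := by
  induction hd : H.dist r x generalizing x with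
  | zero => exact ⟨x, by omega⟩
  | succ m ih =>
    rcases (show k = m + 1 ∨ k ≤ m by omega) with rfl | hk
    · exact ⟨x, hd⟩
    · obtain ⟨p, -, hp⟩ := exists_adj_dist_eq_of_dist_eq_succ hd
      exact ih (hp ▸ hk) hp

lemma finite_setOf_dist_eq (hH : H.Preconnected) (hlf : ∀ v, (H.neighborSet v).Finite) (k : ℕ) :
    {x | H.dist r x = k}.Finite := by
  induction k with
  | zero => exact (Set.finite_singleton r).subset fun x hx => ((hH r x).dist_eq_zero_iff.mp hx).symm
  | succ k ih =>
    refine (ih.biUnion fun p _ => hlf p).subset fun x hx => ?_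
    obtain ⟨p, hpx, hp⟩ := exists_adj_dist_eq_of_dist_eq_succ hx
    exact Set.mem_biUnion hp hpx

lemma exists_dist_eq [Infinite W] (hH : H.Preconnected) (hlf : ∀ v, (H.neighborSet v).Finite)
    (r : W) (k : ℕ) : ∃ x, H.dist r x = k := by
  have hfin : {x | H.dist r x < k}.Finite :=
    ((Set.finite_Iio k).biUnion fun j _ => finite_setOf_dist_eq (r := r) hH hlf j).subset
      fun x hx => Set.mem_biUnion hx rfl
  obtain ⟨x, hx⟩ := hfin.infinite_compl.nonempty
  exact exists_dist_eq_of_le (not_lt.mp hx)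

lemma isClique_setOf_dist_eq (hclaw : IsEmpty (claw ↪g H)) (hbull : IsEmpty (bull ↪g H))
    (hr : H.IsClique (H.neighborSet r)) {i : ℕ} (hi : 1 ≤ i) : H.IsClique {x | H.dist r x = i} := by
  have gap {a b : W} : H.dist r a + 2 ≤ H.dist r b → ¬ H.Adj a b := not_adj_of_dist_add_two_le
  have ne {a b : W} : H.dist r a ≠ H.dist r b → a ≠ b := ne_of_apply_ne _
  induction i, hi using Nat.le_induction with
  | base => simp only [dist_eq_one_iff_adj]; exact hr
  | succ i hi ih =>
    obtain ⟨j, rfl⟩ : ∃ j, i = j + 1 := ⟨i - 1, by omega⟩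
    intro x (hx : H.dist r x = j + 2) x' (hx' : H.dist r x' = j + 2) hxx'
    by_contra hnxx'
    have no_common_parent : ∀ w, H.dist r w = j + 1 → H.Adj w x → ¬ H.Adj w x' := by
      intro w hw hwx hwx'
      obtain ⟨q, hqw, hq⟩ := exists_adj_dist_eq_of_dist_eq_succ hw
      exact false_of_induced_claw hclaw hqw.symm hwx hwx' (ne (by omega)) (ne (by omega)) hxx'
        (gap (by omega)) (gap (by omega)) hnxx'
    obtain ⟨p, hpx, hp⟩ := exists_adj_dist_eq_of_dist_eq_succ hx
    obtain ⟨p', hpx', hp'⟩ := exists_adj_dist_eq_of_dist_eq_succ hx'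
    have hpp' : H.Adj p p' := ih hp hp' fun h => no_common_parent p hp hpx (h ▸ hpx')
    obtain ⟨q, hqp, hq⟩ := exists_adj_dist_eq_of_dist_eq_succ hp
    by_cases hqp' : H.Adj q p'
    · exact false_of_induced_bull hbull hpp' hqp.symm hqp'.symm hpx hpx'
        (no_common_parent p hp hpx) (fun h => no_common_parent p' hp' h hpx')
        (gap (by omega)) (gap (by omega)) hnxx'
    · exact false_of_induced_claw hclaw hqp.symm hpp' hpx (ne (by omega)) (ne (by omega))
        (ne (by omega)) hqp' (gap (by omega)) (fun h => no_common_parent p' hp' h hpx')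

end Layers

lemma Reachable.mem_of_forall_adj {x y : W} {P : Set W} (h : H.Reachable x y) (hx : x ∈ P)
    (hP : ∀ ⦃a b⦄, a ∈ P → H.Adj a b → b ∈ P) : y ∈ P := by
  rw [reachable_eq_reflTransGen] at h
  induction h with
  | refl => exact hx
  | tail _ hab ih => exact hP ih hab

namespace ComponentCompl

variable {K L : Set V} {C D : G.ComponentCompl L} {x y : V}

def Touches (C : G.ComponentCompl L) (s : V) : Prop := ∃ x ∈ C, G.Adj s x

lemma ne_of_mem_of_ne (h : C ≠ D) (hx : x ∈ C) (hy : y ∈ D) : x ≠ y :=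
  (ComponentCompl.pairwise_disjoint h).ne_of_mem hx hy

lemma not_adj_of_ne (h : C ≠ D) (hx : x ∈ C) (hy : y ∈ D) : ¬ G.Adj x y := fun hxy =>
  ne_of_mem_of_ne h (mem_of_adj x y hx (notMem_of_mem hy) hxy) hy rfl

lemma preconnected_induce (C : G.ComponentCompl L) : (G.induce (C : Set V)).Preconnected :=
  (ConnectedComponent.connected_toSimpleGraph C).preconnected.map
    { toFun := fun x => ⟨x.1.1, by exact ⟨x.1.2, x.2⟩⟩, map_rel' := id }
    (by rintro ⟨v, hv, hC⟩; exact ⟨⟨⟨v, hv⟩, hC⟩, rfl⟩)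

lemma coe_hom_eq_of_forall_not_touches (hKL : K ⊆ L) (h : ∀ s ∈ L, s ∉ K → ¬ C.Touches s) :
    (C.hom hKL : Set V) = C := by
  refine Set.Subset.antisymm (fun v ⟨hvK, hv⟩ => ?_) (C.subset_hom hKL)
  obtain ⟨u, hu⟩ := C.nonempty
  obtain ⟨huK, hu'⟩ := C.subset_hom hKL hu
  have : (G.induce Kᶜ).Reachable ⟨u, huK⟩ ⟨v, hvK⟩ := ConnectedComponent.exact (hu'.trans hv.symm)
  refine this.mem_of_forall_adj (P := {x : (Kᶜ : Set V) | ↑x ∈ C}) (by exact hu)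
    fun a b ha hab => ?_
  by_cases hbL : (b : V) ∈ L
  · exact absurd ⟨a, ha, hab.symm⟩ (h b hbL b.2)
  · exact mem_of_adj (a : V) b ha hbL hab

lemma hom_ne_hom (hCD : C ≠ D) (hKL : K ⊆ L) (hC : (C.hom hKL : Set V) = C) :
    C.hom hKL ≠ D.hom hKL := by
  intro h
  obtain ⟨x, hx⟩ := D.nonempty
  have hxC : x ∈ (C : Set V) := hC ▸ h ▸ D.subset_hom hKL hx
  exact ne_of_mem_of_ne hCD hxC hx rfl

lemma injective_hom_of_not_touches {ι : Type*} {D : ι → G.ComponentCompl L}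
    (hD : Function.Injective D) (hKL : K ⊆ L) (h : ∀ a b, a ≠ b →
      (∀ s ∈ L, s ∉ K → ¬ (D a).Touches s) ∨ (∀ s ∈ L, s ∉ K → ¬ (D b).Touches s)) :
    Function.Injective fun l => (D l).hom hKL := by
  intro a b hab
  by_contra hne
  rcases h a b hne with ha | hb
  · exact hom_ne_hom (hD.ne hne) hKL (coe_hom_eq_of_forall_not_touches hKL ha) hab
  · exact hom_ne_hom (hD.ne (Ne.symm hne)) hKL (coe_hom_eq_of_forall_not_touches hKL hb) hab.symm

lemma exists_not_touches (hclaw : IsEmpty (claw ↪g G)) {D : Fin 3 → G.ComponentCompl L}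
    (hD : Function.Injective D) (s : V) : ∃ k, ¬ (D k).Touches s := by
  by_contra! h
  obtain ⟨x₀, hx₀, h₀⟩ := h 0
  obtain ⟨x₁, hx₁, h₁⟩ := h 1
  obtain ⟨x₂, hx₂, h₂⟩ := h 2
  have h01 : D 0 ≠ D 1 := hD.ne (by decide)
  have h02 : D 0 ≠ D 2 := hD.ne (by decide)
  have h12 : D 1 ≠ D 2 := hD.ne (by decide)
  exact false_of_induced_claw hclaw h₀ h₁ h₂ (ne_of_mem_of_ne h01 hx₀ hx₁)
    (ne_of_mem_of_ne h02 hx₀ hx₂) (ne_of_mem_of_ne h12 hx₁ hx₂) (not_adj_of_ne h01 hx₀ hx₁)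
    (not_adj_of_ne h02 hx₀ hx₂) (not_adj_of_ne h12 hx₁ hx₂)

end ComponentCompl

lemma false_of_adj_of_forall_dist_le_not_adj (hclaw : IsEmpty (claw ↪g G))
    (hbull : IsEmpty (bull ↪g G)) {T : Set V} {r : T} {k : ℕ}
    (hclique : (G.induce T).IsClique {x | (G.induce T).dist r x = k + 1})
    (hz : ∃ z, (G.induce T).dist r z = k + 2) {s c : V} (hs : s ∉ T) (hc : c ∉ T)
    (hsc : G.Adj s c) (hcT : ∀ x ∈ T, ¬ G.Adj c x) {b : T} (hsb : G.Adj s b)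
    (hb : (G.induce T).dist r b = k + 1) (hmin : ∀ x : T, (G.induce T).dist r x ≤ k → ¬ G.Adj s x) :
    False := by
  set H := G.induce T
  have gap {a b : T} : H.dist r a + 2 ≤ H.dist r b → ¬ G.Adj a b := not_adj_of_dist_add_two_le
  have ne {a b : T} (h : H.dist r a ≠ H.dist r b) : (a : V) ≠ b :=
    Subtype.val_injective.ne (ne_of_apply_ne _ h)
  have hs_ne (a : T) : s ≠ a := fun h => hs (h ▸ a.2)
  have hc_ne (a : T) : c ≠ a := fun h => hc (h ▸ a.2)
  have hcT' (a : T) : ¬ G.Adj a c := fun h => hcT a a.2 h.symm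
  have no_up (b' w : T) (hsb' : G.Adj s b') (hb' : H.dist r b' = k + 1)
      (hw : H.dist r w = k + 2) : ¬ G.Adj b' w := by
    intro hb'w
    obtain ⟨p, hpb', hp⟩ := exists_adj_dist_eq_of_dist_eq_succ hb'
    have hsp : ¬ G.Adj s p := hmin p hp.le
    by_cases hsw : G.Adj s w
    · exact false_of_induced_bull hbull hsb' hsw hb'w hsc hpb'.symm hsp (hcT' b') (hcT' w)
        (fun h => gap (by omega) h.symm) (hcT p p.2)
    · exact false_of_induced_claw hclaw hsb'.symm hpb'.symm hb'w (hs_ne p) (hs_ne w)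
        (ne (by omega)) hsp hsw (gap (by omega))
  obtain ⟨z, hz⟩ := hz
  have hsz : ¬ G.Adj s z := fun hsz =>
    false_of_induced_claw hclaw hsb hsz hsc (ne (by omega)) (hc_ne b).symm (hc_ne z).symm
      (no_up b z hsb hb hz) (hcT' b) (hcT' z)
  obtain ⟨b', hb'z, hb'⟩ := exists_adj_dist_eq_of_dist_eq_succ hz
  by_cases hsb' : G.Adj s b'
  · exact no_up b' z hsb' hb' hz hb'z
  have hbb' : G.Adj b b' := hclique hb hb' fun h => hsb' (h ▸ hsb)
  obtain ⟨p', hp'b', hp'⟩ := exists_adj_dist_eq_of_dist_eq_succ hb'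
  by_cases hbp' : G.Adj b p'
  · exact false_of_induced_bull hbull hbb' hbp' hp'b'.symm hsb.symm hb'z (no_up b z hsb hb hz)
      (fun h => hsb' h.symm) (fun h => hmin p' hp'.le h.symm) (gap (by omega)) hsz
  · exact false_of_induced_claw hclaw hbb'.symm hb'z hp'b'.symm (ne (by omega)) (ne (by omega))
      (ne (by omega)) (no_up b z hsb hb hz) hbp' (fun h => gap (by omega) h.symm)

lemma forall_not_adj_of_private_neighbor (hclaw : IsEmpty (claw ↪g G))
    (hbull : IsEmpty (bull ↪g G)) (hlf : ∀ v, (G.neighborSet v).Finite) {T : Set V}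
    (hT : T.Infinite) (hTc : (G.induce T).Preconnected) {r : T}
    (hr : (G.induce T).IsClique ((G.induce T).neighborSet r)) {s c : V} (hs : s ∉ T)
    (hc : c ∉ T) (hsc : G.Adj s c) (hcT : ∀ x ∈ T, ¬ G.Adj c x) (hsr : ¬ G.Adj s r) :
    ∀ x ∈ T, ¬ G.Adj s x := by
  classical
  have : Infinite T := hT.to_subtype
  by_contra! hsT
  have hP : ∃ k, ∃ b : T, G.Adj s b ∧ (G.induce T).dist r b = k :=
    let ⟨x, hx, hsx⟩ := hsT; ⟨_, ⟨x, hx⟩, hsx, rfl⟩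
  obtain ⟨b, hsb, hb⟩ := Nat.find_spec hP
  obtain ⟨k, hk⟩ : ∃ k, Nat.find hP = k + 1 := Nat.exists_eq_add_one.mpr <|
    Nat.pos_of_ne_zero fun h0 => hsr (((hTc r b).dist_eq_zero_iff.mp (hb.trans h0)) ▸ hsb)
  refine false_of_adj_of_forall_dist_le_not_adj hclaw hbull ?_
    (exists_dist_eq hTc (fun v => (hlf v).preimage Subtype.val_injective.injOn) r (k + 2))
    hs hc hsc hcT hsb (hb.trans hk) fun x hx hsx => Nat.find_min hP (by omega) ⟨x, hsx, rfl⟩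
  exact isClique_setOf_dist_eq ⟨fun f => hclaw.false (f.trans (Embedding.induce T))⟩
    ⟨fun f => hbull.false (f.trans (Embedding.induce T))⟩ hr (by omega)

open ComponentCompl in
lemma false_of_crossing_touches (hclaw : IsEmpty (claw ↪g G)) (hbull : IsEmpty (bull ↪g G))
    (hlf : ∀ v, (G.neighborSet v).Finite) {S : Set V} {C D E : G.ComponentCompl S}
    (hCD : C ≠ D) (hCE : C ≠ E) (hDE : D ≠ E) (hC : (C : Set V).Infinite) {s t : V}
    (hs : s ∈ S) (ht : t ∈ S) (hsC : C.Touches s) (hsD : D.Touches s) (hsE : ¬ E.Touches s)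
    (htC : C.Touches t) (htE : E.Touches t) (htD : ¬ D.Touches t) : False := by
  obtain ⟨a, haC, hta⟩ := htC
  obtain ⟨y, hyE, hty⟩ := htE
  obtain ⟨c, hcD, hsc⟩ := hsD
  obtain ⟨b, hbC, hsb⟩ := hsC
  set T : Set V := (C : Set V) ∪ {t, y}
  have hyT : y ∈ T := by simp [T]
  have hTc : (G.induce T).Connected := connected_induce_union C.preconnected_induce
    (induce_pair_connected_of_adj hty).preconnected haC (Set.mem_insert t _) hta.symm
  have hr : (G.induce T).IsClique ((G.induce T).neighborSet ⟨y, hyT⟩) := by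
    refine Set.Subsingleton.pairwise (fun x hx x' hx' => ?_) _
    suffices ∀ x : T, G.Adj y x → (x : V) = t from
      Subtype.ext ((this x hx).trans (this x' hx').symm)
    rintro ⟨x, hxC | rfl | rfl⟩ hyx
    · exact absurd hyx (not_adj_of_ne hCE.symm hyE hxC)
    · rfl
    · exact absurd hyx G.irrefl
  have hsT : s ∉ T := by
    rintro (hsC | rfl | rfl)
    · exact notMem_of_mem hsC hs
    · exact htD ⟨c, hcD, hsc⟩
    · exact notMem_of_mem hyE hs
  have hcT : c ∉ T := by
    rintro (hcC | rfl | rfl)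
    · exact ne_of_mem_of_ne hCD hcC hcD rfl
    · exact notMem_of_mem hcD ht
    · exact ne_of_mem_of_ne hDE hcD hyE rfl
  have hc_adj : ∀ x ∈ T, ¬ G.Adj c x := by
    rintro x (hxC | rfl | rfl)
    · exact not_adj_of_ne hCD.symm hcD hxC
    · exact fun h => htD ⟨c, hcD, h.symm⟩
    · exact not_adj_of_ne hDE hcD hyE
  exact forall_not_adj_of_private_neighbor hclaw hbull hlf (hC.mono Set.subset_union_left)
    hTc.preconnected hr hsT hcT hsc hc_adj (fun h => hsE ⟨y, hyE, h⟩) b (Or.inl hbC) hsb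

open ComponentCompl in
lemma false_of_three_infinite_componentCompl (hclaw : IsEmpty (claw ↪g G))
    (hbull : IsEmpty (bull ↪g G)) (hlf : ∀ v, (G.neighborSet v).Finite) (hG : G.Preconnected)
    (S : Finset V) (D : Fin 3 → G.ComponentCompl (S : Set V)) (hD : Function.Injective D)
    (hinf : ∀ i, (D i : Set V).Infinite) : False := by
  classical
  induction S using Finset.strongInduction with
  | H S ih =>
  have miss_le_one (s : V) (hs : s ∈ S) (i j : Fin 3) (hi : ¬ (D i).Touches s)
      (hj : ¬ (D j).Touches s) : i = j := by
    by_contra hij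
    have hsub : ((S.erase s : Finset V) : Set V) ⊆ S := Finset.coe_subset.mpr (S.erase_subset s)
    have untouched {l : Fin 3} (hl : ¬ (D l).Touches s) :
        ∀ x ∈ (S : Set V), x ∉ ((S.erase s : Finset V) : Set V) → ¬ (D l).Touches x := by
      intro x hxS hxK
      obtain rfl : x = s := by simpa [hxS] using hxK
      exact hl
    refine ih _ (S.erase_ssubset hs) _ (injective_hom_of_not_touches hD hsub fun a b hab => ?_)
      fun l => (D l).hom_infinite hsub (hinf l)
    rcases (by decide : ∀ a b i j : Fin 3, a ≠ b → i ≠ j → a = i ∨ a = j ∨ b = i ∨ b = j)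
      a b i j hab hij with rfl | rfl | rfl | rfl
    exacts [.inl (untouched hi), .inl (untouched hj), .inr (untouched hi), .inr (untouched hj)]
  rcases S.eq_empty_or_nonempty with rfl | ⟨s, hs⟩
  · obtain ⟨u, hu⟩ := (D 0).nonempty
    obtain ⟨v, hv⟩ := (D 1).nonempty
    have hv₀ : v ∈ D 0 :=
      (hG u v).mem_of_forall_adj hu fun a b ha hab => mem_of_adj a b ha (by simp) hab
    exact ne_of_mem_of_ne (hD.ne (by decide)) hv₀ hv rfl
  have touched (k : Fin 3) : ∃ t ∈ S, (D k).Touches t := by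
    obtain ⟨⟨x, t⟩, hx, ht, hxt⟩ := (D k).exists_adj_boundary_pair hG ⟨s, hs⟩
    exact ⟨t, ht, x, hx, hxt.symm⟩
  have touches_of_ne {x : V} (hx : x ∈ S) {m l : Fin 3} (hm : ¬ (D m).Touches x) (hl : l ≠ m) :
      (D l).Touches x := by_contra fun h => hl (miss_le_one x hx l m h hm)
  obtain ⟨k, hk⟩ := exists_not_touches hclaw hD s
  obtain ⟨t, ht, htk⟩ := touched k
  obtain ⟨j, hj⟩ := exists_not_touches hclaw hD t
  have hjk : j ≠ k := by rintro rfl; exact hj htk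
  obtain ⟨i, hij, hik⟩ := (by decide : ∀ j k : Fin 3, ∃ i, i ≠ j ∧ i ≠ k) j k
  exact false_of_crossing_touches hclaw hbull hlf (hD.ne hij) (hD.ne hik) (hD.ne hjk) (hinf i)
    hs ht (touches_of_ne hs hk hik) (touches_of_ne hs hk hjk) hk (touches_of_ne ht hj hij) htk hj

lemma end_eventually_ne {e f : G.end} (h : e ≠ f) :
    ∃ L : Finset V, ∀ K, L ⊆ K → e.val (.op K) ≠ f.val (.op K) := by
  obtain ⟨L, hL⟩ := Function.ne_iff.mp fun h' => h (Subtype.ext h')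
  refine ⟨L.unop, fun K hK hK' => hL ?_⟩
  rw [← e.prop (CategoryTheory.opHomOfLE hK), ← f.prop (CategoryTheory.opHomOfLE hK), hK']

lemma end_val_infinite (e : G.end) (K : Finset V) : (e.val (.op K)).supp.Infinite :=
  (e.val _).infinite_iff_in_all_ranges.mpr fun L hKL =>
    ⟨e.val (.op L), e.prop (CategoryTheory.opHomOfLE hKL)⟩

end SimpleGraph

theorem stmt10 {V : Type u} (G : SimpleGraph V)
    (hlf : ∀ v : V, (G.neighborSet v).Finite) (hconn : G.Connected)
    (hclaw : IsEmpty (claw ↪g G)) (hbull : IsEmpty (bull ↪g G)) :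
    ∀ e₁ e₂ e₃ : G.end, e₁ = e₂ ∨ e₁ = e₃ ∨ e₂ = e₃ := by
  classical
  intro e₁ e₂ e₃
  by_contra! ⟨h₁₂, h₁₃, h₂₃⟩
  obtain ⟨L₁₂, hL₁₂⟩ := end_eventually_ne h₁₂
  obtain ⟨L₁₃, hL₁₃⟩ := end_eventually_ne h₁₃
  obtain ⟨L₂₃, hL₂₃⟩ := end_eventually_ne h₂₃
  set K := L₁₂ ∪ L₁₃ ∪ L₂₃
  have h₁₂ := hL₁₂ K (Finset.subset_union_left.trans Finset.subset_union_left)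
  have h₁₃ := hL₁₃ K (Finset.subset_union_right.trans Finset.subset_union_left)
  have h₂₃ := hL₂₃ K Finset.subset_union_right
  refine false_of_three_infinite_componentCompl hclaw hbull hlf hconn.preconnected K
    ![e₁.val (.op K), e₂.val (.op K), e₃.val (.op K)] ?_ fun i => ?_
  · intro i j
    fin_cases i <;> fin_cases j <;> simp <;> first | assumption | exact Ne.symm ‹_›
  · fin_cases i <;> exact end_val_infinite _ K
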